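/- Let R be a finite nonempty set of elements of the Pauli group 𝒫 (on n qudits of dimension D) that contains the identity matrix, is closed under matrix multiplication, and is linearly independent over ℂ as a family of matrices. Let p and q be elements of 𝒫. Then: (i) the family (p·r)_{r∈R} is linearly independent over ℂ; (ii) exactly one of the following holds: either there exist a complex number c and an element r ∈ R with p = c·(q·r) — in which case every element of p·R is c times an element of q·R — or the family of 2·|R| matrices consisting of all products p·r together with all products q·r for r ∈ R is linearly independent over ℂ. -/

import Mathlib

/-- The Pauli product `E(x,z)` representing `X^{x₁}Z^{z₁} ⊗ ⋯ ⊗ X^{xₙ}Z^{zₙ}` on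
`n` qudits of dimension `D`, as a matrix indexed by `Fin n → ZMod D`. -/
noncomputable def pauliE (D n : ℕ) (x z : Fin n → ZMod D) :
    Matrix (Fin n → ZMod D) (Fin n → ZMod D) ℂ :=
  fun a b =>
    if a = b - x then
      Complex.exp ((2 * (Real.pi : ℂ) * Complex.I / (D : ℂ)) * (((∑ i, z i * b i).val : ℂ)))
    else 0

/-- The Pauli group on `n` qudits of dimension `D`: phases `exp(2πi·l/D)` times Pauli
products. -/
noncomputable def pauliGroup (D n : ℕ) :
    Set (Matrix (Fin n → ZMod D) (Fin n → ZMod D) ℂ) :=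
  {P | ∃ (l : ℕ) (x z : Fin n → ZMod D),
    P = Complex.exp (2 * (Real.pi : ℂ) * Complex.I * (l : ℂ) / (D : ℂ)) • pauliE D n x z}

/-!
Pauli products are orthogonal for the trace form: `tr (E(-x,-z) E(x',z'))` vanishes unless
`(x',z') = (x,z)`. Hence a family of nonzero multiples of Pauli products is linearly independent
as soon as no two of its members are proportional. Left multiplication by the invertible `p`
preserves the independence of `R`. If `p r` were proportional to `q r'`, then `p` would be
proportional to `q (r' s)`, where `r s = 1` with `s ∈ R` because `R` is a finite monoid of
invertible matrices; so otherwise the `2|R|` matrices `p R ∪ q R` are independent.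
-/

open Matrix Finset

theorem AddChar.map_sum_eq_prod {ι A M : Type*} [AddCommMonoid A] [CommMonoid M]
    (ψ : AddChar A M) (s : Finset ι) (f : ι → A) : ψ (∑ i ∈ s, f i) = ∏ i ∈ s, ψ (f i) := by
  classical
  induction s using Finset.induction_on with
  | empty => simp
  | insert i s hi ih => rw [sum_insert hi, prod_insert hi, map_add_eq_mul, ih]

theorem Finset.exists_mul_eq_one_of_isLeftRegular {M : Type*} [Monoid M] [DecidableEq M]
    {S : Finset M} (h1 : 1 ∈ S) (hmul : ∀ a ∈ S, ∀ b ∈ S, a * b ∈ S) {r : M} (hr : r ∈ S)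
    (hreg : IsLeftRegular r) : ∃ s ∈ S, r * s = 1 := by
  have hsub : S.image (r * ·) ⊆ S := image_subset_iff.mpr fun s hs => hmul r hr s hs
  have himage : S.image (r * ·) = S :=
    eq_of_subset_of_card_le hsub (card_image_of_injective S hreg).ge
  rw [← himage] at h1
  exact mem_image.mp h1

-- Arbitrary nonzero phases spare us checking that Pauli phases multiply to `D`-th roots of unity.
def scaledPauli (D n : ℕ) : Set (Matrix (Fin n → ZMod D) (Fin n → ZMod D) ℂ) :=
  {P | ∃ (c : ℂˣ) (x z : Fin n → ZMod D), P = (c : ℂ) • pauliE D n x z}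

theorem pauliGroup_subset_scaledPauli {D n : ℕ} : pauliGroup D n ⊆ scaledPauli D n := by
  rintro P ⟨l, x, z, rfl⟩
  exact ⟨Units.mk0 _ (Complex.exp_ne_zero _), x, z, rfl⟩

section
variable {D n : ℕ} [NeZero D]

local notation "𝕄" => Matrix (Fin n → ZMod D) (Fin n → ZMod D) ℂ

theorem pauliE_apply (x z a b : Fin n → ZMod D) :
    pauliE D n x z a b = if a = b - x then ZMod.stdAddChar (z ⬝ᵥ b) else 0 := by
  rw [pauliE, ZMod.stdAddChar_apply, ZMod.toCircle_apply]
  split_ifs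
  · congr 1; rw [dotProduct]; ring
  · rfl

theorem pauliE_mul_pauliE (x z x' z' : Fin n → ZMod D) :
    pauliE D n x z * pauliE D n x' z' =
      ZMod.stdAddChar (-(z ⬝ᵥ x')) • pauliE D n (x + x') (z + z') := by
  ext a b
  rw [mul_apply, Fintype.sum_eq_single (b - x') fun c hc => by
    rw [pauliE_apply x' z' c b, if_neg hc, mul_zero]]
  simp only [pauliE_apply, Matrix.smul_apply, smul_eq_mul, sub_sub, add_comm x']
  split_ifs
  · rw [← AddChar.map_add_eq_mul, ← AddChar.map_add_eq_mul, dotProduct_sub, add_dotProduct]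
    ring_nf
  · rw [zero_mul, mul_zero]

theorem pauliE_zero_zero : pauliE D n 0 0 = 1 := by
  ext a b
  simp [pauliE_apply, one_apply]

theorem sum_stdAddChar_dotProduct (z : Fin n → ZMod D) :
    ∑ b, (ZMod.stdAddChar (z ⬝ᵥ b) : ℂ) = if z = 0 then (D : ℂ) ^ n else 0 := by
  classical
  simp_rw [dotProduct, AddChar.map_sum_eq_prod, mul_comm (z _)]
  rw [← Fintype.prod_sum fun i t => (ZMod.stdAddChar (t * z i) : ℂ),
    Fintype.prod_congr _ _ fun i => AddChar.sum_mulShift _ (ZMod.isPrimitive_stdAddChar D)]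
  push_cast
  simp [Fintype.prod_ite_zero, funext_iff, ZMod.card]

theorem trace_pauliE (x z : Fin n → ZMod D) :
    (pauliE D n x z).trace = if x = 0 ∧ z = 0 then (D : ℂ) ^ n else 0 := by
  by_cases hx : x = 0
  · subst hx
    simp [trace, pauliE_apply, sum_stdAddChar_dotProduct]
  · simp [trace, pauliE_apply, hx, eq_sub_iff_add_eq]

theorem trace_pauliE_neg_mul_pauliE (x z x' z' : Fin n → ZMod D) :
    (pauliE D n (-x) (-z) * pauliE D n x' z').trace =
      if x' = x ∧ z' = z then ZMod.stdAddChar (z ⬝ᵥ x) * (D : ℂ) ^ n else 0 := by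
  rw [pauliE_mul_pauliE, trace_smul, trace_pauliE]
  simp only [neg_add_eq_sub, sub_eq_zero, neg_dotProduct, neg_neg, smul_eq_mul]
  split_ifs with h
  · rw [h.1]
  · rw [mul_zero]

theorem linearIndependent_pauliE : LinearIndependent ℂ (Function.uncurry (pauliE D n)) := by
  rw [Fintype.linearIndependent_iff]
  rintro g hg ⟨x, z⟩
  -- the functional `A ↦ tr (E(-x,-z) A)` picks out the coefficient of `E(x,z)`
  have h := congrArg (fun A => (pauliE D n (-x) (-z) * A).trace) hg
  simp only [mul_sum, trace_sum, mul_smul_comm, trace_smul, smul_eq_mul, mul_zero, trace_zero,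
    Function.uncurry, trace_pauliE_neg_mul_pauliE, mul_ite, mul_zero] at h
  rw [Fintype.sum_eq_single (x, z) fun k hk => if_neg fun hkxz => hk (Prod.ext hkxz.1 hkxz.2),
    if_pos ⟨rfl, rfl⟩] at h
  simpa [NeZero.ne D, (AddChar.val_isUnit _ _).ne_zero] using h

theorem mul_mem_scaledPauli {P Q : 𝕄} (hP : P ∈ scaledPauli D n) (hQ : Q ∈ scaledPauli D n) :
    P * Q ∈ scaledPauli D n := by
  obtain ⟨c, x, z, rfl⟩ := hP
  obtain ⟨c', x', z', rfl⟩ := hQ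
  refine ⟨c * c' * (AddChar.val_isUnit ZMod.stdAddChar (-(z ⬝ᵥ x'))).unit, x + x', z + z', ?_⟩
  rw [smul_mul_smul_comm, pauliE_mul_pauliE, smul_smul]
  simp

theorem isUnit_of_mem_scaledPauli {P : 𝕄} (hP : P ∈ scaledPauli D n) : IsUnit P := by
  obtain ⟨c, x, z, rfl⟩ := hP
  refine IsUnit.of_mul_eq_one (((c : ℂ) * ZMod.stdAddChar (z ⬝ᵥ x))⁻¹ • pauliE D n (-x) (-z)) ?_
  rw [smul_mul_smul_comm, pauliE_mul_pauliE, smul_smul]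
  have hψ := (AddChar.val_isUnit ZMod.stdAddChar (z ⬝ᵥ x)).ne_zero
  simp only [add_neg_cancel, pauliE_zero_zero, dotProduct_neg, neg_neg]
  convert one_smul ℂ (1 : 𝕄)
  field_simp

theorem linearIndependent_of_mem_scaledPauli {ι : Type*} {F : ι → 𝕄}
    (hF : ∀ k, F k ∈ scaledPauli D n) (hprop : ∀ k k' (e : ℂ), e ≠ 0 → F k = e • F k' → k = k') :
    LinearIndependent ℂ F := by
  choose c x z hcxz using hF
  have hlabel : Function.Injective fun k => (x k, z k) := by
    intro k k' hkk'
    obtain ⟨hx, hz⟩ := Prod.mk.inj hkk'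
    refine hprop k k' _ (c k / c k').ne_zero ?_
    rw [hcxz k, hcxz k', hx, hz, smul_smul, Units.val_div_eq_div_val,
      div_mul_cancel₀ _ (c k').ne_zero]
  rw [show F = _ from funext hcxz]
  exact (linearIndependent_pauliE.comp _ hlabel).units_smul c

theorem linearIndependent_sum_elim_mul {R : Finset 𝕄} (hRP : ∀ r ∈ R, r ∈ scaledPauli D n)
    (hR1 : 1 ∈ R) (hRmul : ∀ a ∈ R, ∀ b ∈ R, a * b ∈ R)
    (hRli : LinearIndependent ℂ (fun r : R => (r : 𝕄))) {p q : 𝕄}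
    (hp : p ∈ scaledPauli D n) (hq : q ∈ scaledPauli D n)
    (hpq : ¬∃ c : ℂ, ∃ r ∈ R, p = c • (q * r)) :
    LinearIndependent ℂ (Sum.elim (fun r : R => p * r) (fun r : R => q * r)) := by
  classical
  have cancel : ∀ {u : 𝕄}, u ∈ scaledPauli D n → ∀ (r r' : R) (e : ℂ),
      u * r = e • (u * r') → r = r' := by
    intro u hu r r' e h
    rw [← mul_smul_comm, (isUnit_of_mem_scaledPauli hu).mul_right_inj] at h
    exact hRli.eq_of_smul_apply_eq_smul_apply 1 e r r' one_ne_zero (by rwa [one_smul])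
  have cross : ∀ (r r' : R) (e : ℂ), p * r ≠ e • (q * r') := by
    intro r r' e h
    obtain ⟨s, hs, hrs⟩ := exists_mul_eq_one_of_isLeftRegular hR1 hRmul r.2
      (isUnit_of_mem_scaledPauli (hRP r r.2)).isRegular.left
    refine hpq ⟨e, r' * s, hRmul _ r'.2 _ hs, ?_⟩
    rw [← mul_one p, ← hrs, ← mul_assoc, h, smul_mul_assoc, mul_assoc]
  refine linearIndependent_of_mem_scaledPauli ?_ ?_
  · rintro (r | r)
    exacts [mul_mem_scaledPauli hp (hRP r r.2), mul_mem_scaledPauli hq (hRP r r.2)]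
  · rintro (r | r) (r' | r') e he h <;> simp only [Sum.elim_inl, Sum.elim_inr] at h
    · exact congrArg Sum.inl (cancel hp r r' e h)
    · exact (cross r r' e h).elim
    · exact (cross r' r e⁻¹ (by rw [h, smul_smul, inv_mul_cancel₀ he, one_smul])).elim
    · exact congrArg Sum.inr (cancel hq r r' e h)

end

theorem pauli_coset_lemma_general (D n : ℕ) [NeZero D]
    (R : Finset (Matrix (Fin n → ZMod D) (Fin n → ZMod D) ℂ))
    (hRP : ∀ r ∈ R, r ∈ pauliGroup D n)
    (hR1 : (1 : Matrix (Fin n → ZMod D) (Fin n → ZMod D) ℂ) ∈ R)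
    (hRmul : ∀ a ∈ R, ∀ b ∈ R, a * b ∈ R)
    (hRli : LinearIndependent ℂ
      (fun r : R => (r : Matrix (Fin n → ZMod D) (Fin n → ZMod D) ℂ)))
    (p q : Matrix (Fin n → ZMod D) (Fin n → ZMod D) ℂ)
    (hp : p ∈ pauliGroup D n) (hq : q ∈ pauliGroup D n) :
    LinearIndependent ℂ
      (fun r : R => p * (r : Matrix (Fin n → ZMod D) (Fin n → ZMod D) ℂ)) ∧
    Xor'
      (∃ c : ℂ, (∃ r ∈ R, p = c • (q * r)) ∧
        ∀ r ∈ R, ∃ r' ∈ R, p * r = c • (q * r'))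
      (LinearIndependent ℂ
        (Sum.elim (fun r : R => p * (r : Matrix (Fin n → ZMod D) (Fin n → ZMod D) ℂ))
          (fun r : R => q * (r : Matrix (Fin n → ZMod D) (Fin n → ZMod D) ℂ)))) := by
  have hp' := pauliGroup_subset_scaledPauli hp
  have hRP' : ∀ r ∈ R, r ∈ scaledPauli D n := fun r hr => pauliGroup_subset_scaledPauli (hRP r hr)
  have hmulLeft : LinearMap.ker (LinearMap.mulLeft ℂ p) = ⊥ :=
    LinearMap.ker_eq_bot.mpr (isUnit_of_mem_scaledPauli hp').mul_right_injective
  refine ⟨by simpa only [Function.comp_def, LinearMap.mulLeft_apply] using hRli.map' _ hmulLeft, ?_⟩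
  by_cases hpq : ∃ c : ℂ, ∃ r ∈ R, p = c • (q * r)
  · obtain ⟨c, r₀, hr₀, hpc⟩ := hpq
    refine Or.inl ⟨⟨c, ⟨r₀, hr₀, hpc⟩, fun r hr => ⟨r₀ * r, hRmul _ hr₀ _ hr, ?_⟩⟩, fun hli => ?_⟩
    · rw [hpc, smul_mul_assoc, mul_assoc]
    · refine Sum.inl_ne_inr (hli.eq_of_smul_apply_eq_smul_apply 1 c (.inl ⟨1, hR1⟩) (.inr ⟨r₀, hr₀⟩)
        one_ne_zero ?_)
      simpa only [Sum.elim_inl, Sum.elim_inr, one_smul, mul_one] using hpc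
  · refine Or.inr ⟨?_, fun ⟨c, hc, _⟩ => hpq ⟨c, hc⟩⟩
    exact linearIndependent_sum_elim_mul hRP' hR1 hRmul hRli hp'
      (pauliGroup_subset_scaledPauli hq) hpq

/-- Lemma on cosets of linearly independent subgroups of the Pauli group:
(i) `p·R` is linearly independent; (ii) exactly one of: `p = c·(q·r)` for some phase
`c` and `r ∈ R` (in which case every element of `p·R` is `c` times an element of
`q·R`), or the `2|R|` matrices `p·R ∪ q·R` are linearly independent. -/
theorem pauli_coset_lemma (D n : ℕ) [NeZero D] (hn : 1 ≤ n)
    (R : Finset (Matrix (Fin n → ZMod D) (Fin n → ZMod D) ℂ))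
    (hRP : ∀ r ∈ R, r ∈ pauliGroup D n)
    (hR1 : (1 : Matrix (Fin n → ZMod D) (Fin n → ZMod D) ℂ) ∈ R)
    (hRmul : ∀ a ∈ R, ∀ b ∈ R, a * b ∈ R)
    (hRli : LinearIndependent ℂ
      (fun r : R => (r : Matrix (Fin n → ZMod D) (Fin n → ZMod D) ℂ)))
    (p q : Matrix (Fin n → ZMod D) (Fin n → ZMod D) ℂ)
    (hp : p ∈ pauliGroup D n) (hq : q ∈ pauliGroup D n) :
    LinearIndependent ℂ
      (fun r : R => p * (r : Matrix (Fin n → ZMod D) (Fin n → ZMod D) ℂ)) ∧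
    Xor'
      (∃ c : ℂ, (∃ r ∈ R, p = c • (q * r)) ∧
        ∀ r ∈ R, ∃ r' ∈ R, p * r = c • (q * r'))
      (LinearIndependent ℂ
        (Sum.elim (fun r : R => p * (r : Matrix (Fin n → ZMod D) (Fin n → ZMod D) ℂ))
          (fun r : R => q * (r : Matrix (Fin n → ZMod D) (Fin n → ZMod D) ℂ)))) :=
  pauli_coset_lemma_general D n R hRP hR1 hRmul hRli p q hp hq
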